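/- The direct product H × (ℤ/4ℤ), where H is the semidirect product of a cyclic group ⟨a⟩ of order 8 by a cyclic group ⟨b⟩ of order 2 acting by b⁻¹ab = a³, does NOT have the cut-property; indeed the element g = (a, x), with x a generator of ℤ/4ℤ, is such that g³ is conjugate neither to g nor to g⁻¹. In particular, the direct product of two 2-groups with the cut-property need not have the cut-property. -/

import Mathlib

def HasCut (G : Type*) [Group G] : Prop :=
  ∀ u : (MonoidAlgebra ℤ G)ˣ,
    (↑u : MonoidAlgebra ℤ G) ∈ Subring.center (MonoidAlgebra ℤ G) →
      ∃ g ∈ Subgroup.center G,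
        (↑u : MonoidAlgebra ℤ G) = MonoidAlgebra.of ℤ G g ∨
        (↑u : MonoidAlgebra ℤ G) = -(MonoidAlgebra.of ℤ G g)

/-- The automorphism `x ↦ 3x` of `ℤ/8ℤ`, as an automorphism of the (multiplicatively
written) cyclic group of order 8. -/
def aut3 : MulAut (Multiplicative (ZMod 8)) :=
  AddEquiv.toMultiplicative
    { toFun := fun x => 3 * x
      invFun := fun x => 3 * x
      left_inv := by decide
      right_inv := by decide
      map_add' := by decide }

/-- The action of `ℤ/2ℤ` on `ℤ/8ℤ` whose nontrivial element acts by `x ↦ 3x`. -/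
def phi : Multiplicative (ZMod 2) →* MulAut (Multiplicative (ZMod 8)) where
  toFun x := if Multiplicative.toAdd x = 0 then 1 else aut3
  map_one' := by simp
  map_mul' := by
    have key : aut3 * aut3 = 1 := by
      apply MulEquiv.ext
      decide
    have h2 : ∀ z : ZMod 2, z = 0 ∨ z = 1 := by decide
    intro x y
    rcases h2 (Multiplicative.toAdd x) with hx | hx <;>
      rcases h2 (Multiplicative.toAdd y) with hy | hy <;>
        simp [toAdd_mul, hx, hy, key,
          (by decide : (1 : ZMod 2) + 1 = 0), (by decide : (1 : ZMod 2) ≠ 0)]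

/-- The semidihedral-type group `(ℤ/8ℤ) ⋊ (ℤ/2ℤ)` of order 16,
`⟨a, b | a⁸ = b² = 1, b⁻¹ab = a³⟩`. -/
abbrev SD16 := Multiplicative (ZMod 8) ⋊[phi] Multiplicative (ZMod 2)

/-- The element `g = (a, x)` of `H × ℤ/4ℤ`, where `a` is the generator of the cyclic
normal subgroup `⟨a⟩` of order 8 of `H = SD16` and `x` is a generator of `ℤ/4ℤ`. -/
def g : SD16 × Multiplicative (ZMod 4) :=
  (SemidirectProduct.inl (Multiplicative.ofAdd (1 : ZMod 8)),
    Multiplicative.ofAdd (1 : ZMod 4))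

/-! ### Auxiliary material -/

def sdEquiv : SD16 ≃ (Multiplicative (ZMod 8) × Multiplicative (ZMod 2)) where
  toFun p := (p.left, p.right)
  invFun p := ⟨p.1, p.2⟩
  left_inv _ := rfl
  right_inv _ := rfl

instance : DecidableEq SD16 := fun x y =>
  decidable_of_iff (sdEquiv x = sdEquiv y) sdEquiv.apply_eq_iff_eq

instance : Fintype SD16 := Fintype.ofEquiv _ sdEquiv.symm

/-- The big group `G = SD16 × C₄`. -/
abbrev Gbig := SD16 × Multiplicative (ZMod 4)

/-- The abelian subgroup `C₈ × C₄`. -/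
abbrev K := Multiplicative (ZMod 8) × Multiplicative (ZMod 4)

noncomputable abbrev R := MonoidAlgebra ℤ K

noncomputable def α : R := MonoidAlgebra.of ℤ K (Multiplicative.ofAdd (1 : ZMod 8), 1)
noncomputable def β : R := MonoidAlgebra.of ℤ K (1, Multiplicative.ofAdd (1 : ZMod 4))

lemma hα : α ^ 8 = 1 := by
  rw [α, ← map_pow]
  have : ((Multiplicative.ofAdd (1 : ZMod 8), 1) : K) ^ 8 = 1 := by decide
  rw [this, map_one]

lemma hβ : β ^ 4 = 1 := by
  rw [β, ← map_pow]
  have : (((1 : Multiplicative (ZMod 8)), Multiplicative.ofAdd (1 : ZMod 4)) : K) ^ 4 = 1 := by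
    decide
  rw [this, map_one]

/-- A nontrivial unit of `ℤ[C₈ × C₄]` invariant under `a ↦ a³`. -/
noncomputable def uu : R :=
  5 - 4*β^2 + 3*α*β - 3*α*β^3 + 3*α^3*β - 3*α^3*β^3 - 4*α^4 + 4*α^4*β^2
    - 3*α^5*β + 3*α^5*β^3 - 3*α^7*β + 3*α^7*β^3

noncomputable def vv : R :=
  5 - 4*β^2 - 3*α*β + 3*α*β^3 - 3*α^3*β + 3*α^3*β^3 - 4*α^4 + 4*α^4*β^2
    + 3*α^5*β - 3*α^5*β^3 + 3*α^7*β - 3*α^7*β^3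

lemma huv : uu * vv = 1 := by
  rw [uu, vv]
  linear_combination (16 + 4*β^2 - 56*β^4 + 36*β^6 + α^2*(9*β^2 - 18*β^4 + 9*β^6)
      + α^4*(-18*β^2 + 36*β^4 - 18*β^6) + α^6*(-9*β^2 + 18*β^4 - 9*β^6)) * hα
    + (-40 + 36*β^2 + 40*α^4 - 36*α^4*β^2) * hβ

lemma hvu : vv * uu = 1 := by rw [mul_comm]; exact huv

/-- The automorphism `a ↦ a³` of `C₈ × C₄`. -/
noncomputable def τ : K →* K :=
  (AddMonoidHom.toMultiplicative
    { toFun := fun x : ZMod 8 => 3 * x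
      map_zero' := by decide
      map_add' := by decide }).prodMap (MonoidHom.id _)

noncomputable def T : R →+* R := MonoidAlgebra.mapDomainRingHom ℤ τ

lemma hT_single : ∀ (p : K) (c : ℤ),
    T (MonoidAlgebra.single p c) = MonoidAlgebra.single (τ p) c := fun p c =>
  MonoidAlgebra.mapDomain_single

lemma hTα : T α = α ^ 3 := by
  rw [α, ← map_pow, MonoidAlgebra.of_apply, hT_single]
  congr 1

lemma hTβ : T β = β := by
  rw [β, MonoidAlgebra.of_apply, hT_single]
  congr 1

lemma hTu : T uu = uu := by
  rw [uu]
  simp only [map_add, map_sub, map_mul, map_pow, map_ofNat, hTα, hTβ]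
  linear_combination (3*α*β - 3*α*β^3 - 4*α^4 + 4*α^4*β^2 - 3*α^5*β + 3*α^5*β^3
    - 3*α^7*β + 3*α^7*β^3 - 3*α^13*β + 3*α^13*β^3) * hα

lemma hu1 : uu.coeff (1 : K) = 5 := by
  have h3 : (3:R) = MonoidAlgebra.single 1 (3:ℤ) := by
    rw [show (3:R) = ((3:ℤ):R) by norm_num, MonoidAlgebra.intCast_def, Int.cast_id]
  have h4 : (4:R) = MonoidAlgebra.single 1 (4:ℤ) := by
    rw [show (4:R) = ((4:ℤ):R) by norm_num, MonoidAlgebra.intCast_def, Int.cast_id]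
  have h5 : (5:R) = MonoidAlgebra.single 1 (5:ℤ) := by
    rw [show (5:R) = ((5:ℤ):R) by norm_num, MonoidAlgebra.intCast_def, Int.cast_id]
  rw [uu, α, β]
  simp only [MonoidAlgebra.of_apply, h3, h4, h5, MonoidAlgebra.single_pow,
    MonoidAlgebra.single_mul_single]
  have Hs : ∀ f g : R, ∀ t : K, (f - g).coeff t = f.coeff t - g.coeff t := fun f g t =>
    Finsupp.sub_apply f.coeff g.coeff t
  have Ha : ∀ f g : R, ∀ t : K, (f + g).coeff t = f.coeff t + g.coeff t := fun f g t =>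
    Finsupp.add_apply f.coeff g.coeff t
  simp only [Hs, Ha, MonoidAlgebra.coeff_single, Finsupp.single_apply]
  decide

/-- The embedding of `C₈ × C₄` into `G`. -/
noncomputable def ι : K →* Gbig :=
  (SemidirectProduct.inl (φ := phi)).prodMap (MonoidHom.id _)

lemma hιinj : Function.Injective ι := by decide

noncomputable def Φ : R →+* MonoidAlgebra ℤ Gbig := MonoidAlgebra.mapDomainRingHom ℤ ι

lemma hΦ_single : ∀ (p : K) (c : ℤ),
    Φ (MonoidAlgebra.single p c) = MonoidAlgebra.single (ι p) c := fun p c =>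
  MonoidAlgebra.mapDomain_single

/-- The "reflection" element `b` of `G`. -/
def Bel : Gbig := (SemidirectProduct.inr (Multiplicative.ofAdd (1 : ZMod 2)), 1)

lemma hBcomm : ∀ p : K, Bel * ι p = ι (τ p) * Bel := by decide

lemma key : ∀ f : R,
    MonoidAlgebra.single Bel (1:ℤ) * Φ f = Φ (T f) * MonoidAlgebra.single Bel 1 := by
  intro f
  induction f using MonoidAlgebra.induction_linear with
  | zero => simp
  | add f g hf hg => simp only [map_add, add_mul, mul_add, hf, hg]
  | single p c =>
      rw [hΦ_single, hT_single, hΦ_single, MonoidAlgebra.single_mul_single,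
        MonoidAlgebra.single_mul_single, one_mul, mul_one, hBcomm]

/-- The central unit itself. -/
noncomputable def w : MonoidAlgebra ℤ Gbig := Φ uu

lemma commute_single_w : ∀ a : Gbig, Commute (MonoidAlgebra.single a (1:ℤ)) w := by
  have hcommB : Commute (MonoidAlgebra.single Bel (1:ℤ)) w := by
    unfold Commute SemiconjBy
    rw [w, key uu, hTu]
  have hcommι : ∀ p : K, Commute (MonoidAlgebra.single (ι p) (1:ℤ)) w := by
    intro p
    rw [w, ← hΦ_single]
    exact (Commute.all _ _).map Φ.toMonoidHom
  have hgen : ∀ a : Gbig, a = ι (a.1.left, a.2) ∨ a = ι (a.1.left, a.2) * Bel := by decide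
  intro a
  rcases hgen a with h | h
  · rw [h]; exact hcommι _
  · rw [h, ← one_mul (1:ℤ), ← MonoidAlgebra.single_mul_single]
    exact (hcommι _).mul_left hcommB

lemma w_central : w ∈ Subring.center (MonoidAlgebra ℤ Gbig) := by
  rw [Subring.mem_center_iff]
  intro r
  induction r using MonoidAlgebra.induction_linear with
  | zero => simp
  | add f g hf hg => rw [add_mul, mul_add, hf, hg]
  | single a b =>
      have : MonoidAlgebra.single a b = b • MonoidAlgebra.single a (1:ℤ) := by
        rw [MonoidAlgebra.smul_single', mul_one]
      rw [this, smul_mul_assoc, mul_smul_comm, (commute_single_w a).eq]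

lemma hw1 : w.coeff (1 : Gbig) = 5 := by
  have h1 : (1 : Gbig) = ι (1 : K) := (map_one ι).symm
  have h2 : w = MonoidAlgebra.ofCoeff (Finsupp.mapDomain (⇑ι) uu.coeff) := rfl
  rw [h2, h1, MonoidAlgebra.coeff_ofCoeff, Finsupp.mapDomain_apply hιinj, hu1]

noncomputable def Uu : (MonoidAlgebra ℤ Gbig)ˣ :=
  ⟨Φ uu, Φ vv, by rw [← map_mul, huv, map_one], by rw [← map_mul, hvu, map_one]⟩

theorem not_hasCut_SD16_prod_zmod4 :
    ¬ HasCut (SD16 × Multiplicative (ZMod 4)) ∧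
      ¬ IsConj (g ^ 3) g ∧ ¬ IsConj (g ^ 3) g⁻¹ := by
  refine ⟨?_, ?_, ?_⟩
  · intro h
    obtain ⟨g0, -, hcase⟩ := h Uu w_central
    have hUuw : (↑Uu : MonoidAlgebra ℤ Gbig) = w := rfl
    have Hn : ∀ f : MonoidAlgebra ℤ Gbig, ∀ t : Gbig, (-f).coeff t = -(f.coeff t) := fun f t =>
      Finsupp.neg_apply f.coeff t
    rw [hUuw] at hcase
    rcases hcase with hc | hc
    · have h1 : w.coeff (1:Gbig) = (MonoidAlgebra.of ℤ Gbig g0).coeff (1:Gbig) := by rw [hc]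
      rw [hw1, MonoidAlgebra.of_apply, MonoidAlgebra.coeff_single, Finsupp.single_apply] at h1
      split_ifs at h1 <;> omega
    · have h1 : w.coeff (1:Gbig) = (-(MonoidAlgebra.of ℤ Gbig g0)).coeff (1:Gbig) := by rw [hc]
      rw [hw1, MonoidAlgebra.of_apply, Hn, MonoidAlgebra.coeff_single, Finsupp.single_apply] at h1
      split_ifs at h1 <;> omega
  · rw [isConj_iff]; push_neg; decide
  · rw [isConj_iff]; push_neg; decide
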